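/- arXiv:2012.15791 — 5 statements merged into one kernel-verified Lean document; each statement's English description precedes it below -/
import Mathlib

section
/- Let n ≥ 1 and order ℝⁿ componentwise. Let F : ℝⁿ → ℝⁿ be monotone (x ≤ y implies F(x) ≤ F(y)) and satisfy F(x + c·e) ≤ F(x) + c·e for every x ∈ ℝⁿ and every scalar c ≥ 0, where e ∈ ℝⁿ is the all-ones vector. Let D ≥ 0 and x* ∈ ℝⁿ satisfy F(x*) ≤ x* + D·e, and let p ≥ 0. Define the sequence A⁰ = x* + p·e and A^{k+1} = (Aᵏ + F(Aᵏ) + D·e)/2 for k ≥ 0. Then for every k ≥ 0, F(Aᵏ) ≤ A^{k+1} ≤ Aᵏ + D·e (componentwise). -/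
/-- Upper-sequence part of Lemma 1 in the proof of Theorem 1:
if `F : ℝⁿ → ℝⁿ` is monotone (componentwise order) and satisfies
`F(x + c·e) ≤ F(x) + c·e` for every scalar `c ≥ 0` (where `e` is the all-ones
vector), `F(x*) ≤ x* + D·e` with `D ≥ 0`, and the sequence `A` is defined by
`A⁰ = x* + p·e` (with `p ≥ 0`) and `A^{k+1} = (Aᵏ + F(Aᵏ) + D·e)/2`,
then `F(Aᵏ) ≤ A^{k+1} ≤ Aᵏ + D·e` for every `k`. -/
theorem upper_sequence_bounds
    (n : ℕ) (hn : 1 ≤ n)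
    (F : (Fin n → ℝ) → (Fin n → ℝ))
    (hmono : Monotone F)
    (hshift : ∀ (x : Fin n → ℝ) (c : ℝ), 0 ≤ c →
      F (fun i => x i + c) ≤ fun i => F x i + c)
    (D : ℝ) (hD : 0 ≤ D)
    (xs : Fin n → ℝ)
    (hxs : F xs ≤ fun i => xs i + D)
    (p : ℝ) (hp : 0 ≤ p)
    (A : ℕ → (Fin n → ℝ))
    (hA0 : A 0 = fun i => xs i + p)
    (hArec : ∀ k, A (k + 1) = fun i => (A k i + F (A k) i + D) / 2) :
    ∀ k, F (A k) ≤ A (k + 1) ∧ A (k + 1) ≤ fun i => A k i + D := by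
  have key : ∀ k, F (A k) ≤ fun i => A k i + D := by
    intro k
    induction k with
    | zero =>
      rw [hA0]
      calc F (fun i => xs i + p) ≤ fun i => F xs i + p := hshift xs p hp
        _ ≤ fun i => xs i + p + D := by
          intro i
          have := hxs i
          simp only at this ⊢
          linarith
    | succ k ih =>
      have h1 : A (k + 1) ≤ fun i => A k i + D := by
        rw [hArec k]
        intro i
        have := ih i
        simp only at this ⊢
        linarith
      have h2 : F (A k) ≤ A (k + 1) := by
        rw [hArec k]
        intro i
        have := ih i
        simp only at this ⊢
        linarith
      calc F (A (k + 1)) ≤ F (fun i => A k i + D) := hmono h1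
        _ ≤ fun i => F (A k) i + D := hshift (A k) D hD
        _ ≤ fun i => A (k + 1) i + D := by
          intro i
          have := h2 i
          simp only at this ⊢
          linarith
  intro k
  constructor
  · rw [hArec k]
    intro i
    have := key k i
    simp only at this ⊢
    linarith
  · rw [hArec k]
    intro i
    have := key k i
    simp only at this ⊢
    linarith
end

section
/- Let n ≥ 1 and order ℝⁿ componentwise. Let F : ℝⁿ → ℝⁿ be monotone (x ≤ y implies F(x) ≤ F(y)) and satisfy F(x) - c·e ≤ F(x - c·e) for every x ∈ ℝⁿ and every scalar c ≥ 0, where e ∈ ℝⁿ is the all-ones vector. Let D ≥ 0 and x* ∈ ℝⁿ satisfy F(x*) ≥ x* - D·e, and let p ≥ 0. Define the sequence L⁰ = x* - p·e and L^{k+1} = (Lᵏ + F(Lᵏ) - D·e)/2 for k ≥ 0. Then for every k ≥ 0, F(Lᵏ) ≥ L^{k+1} ≥ Lᵏ - D·e (componentwise). -/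
/-- Lower-sequence part of Lemma 1 in the proof of Theorem 1:
if `F : ℝⁿ → ℝⁿ` is monotone (componentwise order) and satisfies
`F(x) - c·e ≤ F(x - c·e)` for every scalar `c ≥ 0` (where `e` is the all-ones
vector), `F(x*) ≥ x* - D·e` with `D ≥ 0`, and the sequence `L` is defined by
`L⁰ = x* - p·e` (with `p ≥ 0`) and `L^{k+1} = (Lᵏ + F(Lᵏ) - D·e)/2`,
then `F(Lᵏ) ≥ L^{k+1} ≥ Lᵏ - D·e` for every `k`. -/
theorem lower_sequence_bounds
    (n : ℕ) (hn : 1 ≤ n)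
    (F : (Fin n → ℝ) → (Fin n → ℝ))
    (hmono : Monotone F)
    (hshift : ∀ (x : Fin n → ℝ) (c : ℝ), 0 ≤ c →
      (fun i => F x i - c) ≤ F (fun i => x i - c))
    (D : ℝ) (hD : 0 ≤ D)
    (xs : Fin n → ℝ)
    (hxs : (fun i => xs i - D) ≤ F xs)
    (p : ℝ) (hp : 0 ≤ p)
    (L : ℕ → (Fin n → ℝ))
    (hL0 : L 0 = fun i => xs i - p)
    (hLrec : ∀ k, L (k + 1) = fun i => (L k i + F (L k) i - D) / 2) :
    ∀ k, L (k + 1) ≤ F (L k) ∧ (fun i => L k i - D) ≤ L (k + 1) := by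
  have key : ∀ k, (fun i => L k i - D) ≤ F (L k) := by
    intro k
    induction k with
    | zero =>
      rw [hL0]
      have h1 := hshift xs p hp
      intro i
      calc xs i - p - D ≤ F xs i - p := by have := hxs i; simp only at this; linarith
        _ ≤ F (fun j => xs j - p) i := h1 i
    | succ k ih =>
      have hstep : (fun i => L k i - D) ≤ L (k + 1) := by
        intro i
        rw [hLrec k]
        simp only
        have := ih i
        simp only at this
        linarith
      have h2 : F (fun i => L k i - D) ≤ F (L (k + 1)) := hmono hstep
      have h3 := hshift (L k) D hD
      intro i
      have h4 : L (k + 1) i ≤ F (L k) i := by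
        rw [hLrec k]
        simp only
        have := ih i
        simp only at this
        linarith
      simp only
      calc L (k + 1) i - D ≤ F (L k) i - D := by linarith
        _ ≤ F (fun j => L k j - D) i := h3 i
        _ ≤ F (L (k + 1)) i := h2 i
  intro k
  have hk := key k
  constructor
  · intro i
    rw [hLrec k]
    simp only
    have := hk i
    simp only at this
    linarith
  · intro i
    rw [hLrec k]
    simp only
    have := hk i
    simp only at this
    linarith
end

section
/- Let n ≥ 1 and order ℝⁿ componentwise. Let F : ℝⁿ → ℝⁿ be monotone and satisfy F(x + c·e) ≤ F(x) + c·e for every x ∈ ℝⁿ and scalar c ≥ 0, where e is the all-ones vector. Let D ≥ 0 and x* ∈ ℝⁿ satisfy F(x*) ≤ x* + D·e and F(x* - D·e) ≥ x* - D·e, and let p ≥ 0. Define A⁰ = x* + p·e and A^{k+1} = (Aᵏ + F(Aᵏ) + D·e)/2 for k ≥ 0. Then Aᵏ ≥ x* - D·e for every k ≥ 0. -/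
/-- Lower bound on the upper comparison sequence `Aᵏ` (proof of Lemma 2 inside
the proof of Theorem 1): under monotonicity, the shift condition
`F(x + c·e) ≤ F(x) + c·e` for `c ≥ 0`, `F(x*) ≤ x* + D·e`, and
`F(x* - D·e) ≥ x* - D·e`, the sequence `A⁰ = x* + p·e`,
`A^{k+1} = (Aᵏ + F(Aᵏ) + D·e)/2` satisfies `Aᵏ ≥ x* - D·e` for every `k`. -/
theorem upper_sequence_lower_bound
    (n : ℕ) (hn : 1 ≤ n)
    (F : (Fin n → ℝ) → (Fin n → ℝ))
    (hmono : Monotone F)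
    (hshift : ∀ (x : Fin n → ℝ) (c : ℝ), 0 ≤ c →
      F (fun i => x i + c) ≤ fun i => F x i + c)
    (D : ℝ) (hD : 0 ≤ D)
    (xs : Fin n → ℝ)
    (hxs : F xs ≤ fun i => xs i + D)
    (hxs' : (fun i => xs i - D) ≤ F (fun i => xs i - D))
    (p : ℝ) (hp : 0 ≤ p)
    (A : ℕ → (Fin n → ℝ))
    (hA0 : A 0 = fun i => xs i + p)
    (hArec : ∀ k, A (k + 1) = fun i => (A k i + F (A k) i + D) / 2) :
    ∀ k, (fun i => xs i - D) ≤ A k := by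
  intro k
  induction k with
  | zero =>
    rw [hA0]
    intro i
    simp only
    linarith
  | succ k ih =>
    rw [hArec]
    intro i
    simp only
    have h1 : F (fun i => xs i - D) ≤ F (A k) := hmono ih
    have h2 := (hxs' i).trans (h1 i)
    have h3 := ih i
    simp only at h2 h3
    linarith
end

section
/- Let n ≥ 1 and order ℝⁿ componentwise. Let F : ℝⁿ → ℝⁿ be monotone and satisfy F(x) - c·e ≤ F(x - c·e) for every x ∈ ℝⁿ and scalar c ≥ 0, where e is the all-ones vector. Let D ≥ 0 and x* ∈ ℝⁿ satisfy F(x*) ≥ x* - D·e and F(x* + D·e) ≤ x* + D·e, and let p ≥ 0. Define L⁰ = x* - p·e and L^{k+1} = (Lᵏ + F(Lᵏ) - D·e)/2 for k ≥ 0. Then Lᵏ ≤ x* + D·e for every k ≥ 0. -/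
/-- Upper bound on the lower comparison sequence `Lᵏ` (proof of Lemma 2 inside
the proof of Theorem 1): under monotonicity, the shift condition
`F(x) - c·e ≤ F(x - c·e)` for `c ≥ 0`, `F(x*) ≥ x* - D·e`, and
`F(x* + D·e) ≤ x* + D·e`, the sequence `L⁰ = x* - p·e`,
`L^{k+1} = (Lᵏ + F(Lᵏ) - D·e)/2` satisfies `Lᵏ ≤ x* + D·e` for every `k`. -/
theorem lower_sequence_upper_bound
    (n : ℕ) (hn : 1 ≤ n)
    (F : (Fin n → ℝ) → (Fin n → ℝ))
    (hmono : Monotone F)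
    (hshift : ∀ (x : Fin n → ℝ) (c : ℝ), 0 ≤ c →
      (fun i => F x i - c) ≤ F (fun i => x i - c))
    (D : ℝ) (hD : 0 ≤ D)
    (xs : Fin n → ℝ)
    (hxs : (fun i => xs i - D) ≤ F xs)
    (hxs' : F (fun i => xs i + D) ≤ fun i => xs i + D)
    (p : ℝ) (hp : 0 ≤ p)
    (L : ℕ → (Fin n → ℝ))
    (hL0 : L 0 = fun i => xs i - p)
    (hLrec : ∀ k, L (k + 1) = fun i => (L k i + F (L k) i - D) / 2) :
    ∀ k, L k ≤ fun i => xs i + D := by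
  intro k
  induction k with
  | zero => rw [hL0]; intro i; simp; linarith
  | succ k ih =>
    rw [hLrec]
    intro i
    have hF : F (L k) ≤ F (fun i => xs i + D) := hmono ih
    have h1 : F (L k) i ≤ xs i + D := le_trans (hF i) (hxs' i)
    have h2 : L k i ≤ xs i + D := ih i
    simp only
    linarith
end

section
/- Let α : ℕ → ℝ satisfy 0 ≤ α(t) < 1 for all t and ∑_{t=0}^{∞} α(t) = ∞, and let w : ℕ → ℝ satisfy w(t) → 0 as t → ∞. Define W : ℕ → ℝ by an arbitrary W(0) and the recursion W(t+1) = (1 - α(t))·W(t) + α(t)·w(t). Then W(t) → 0 as t → ∞. -/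
/-!
Once `|w t| ≤ c` for `t ≥ T`, the excess `|W t| - c` is multiplied by at most `1 - α t` at each
step, so it is bounded by `∏_{T ≤ s < t} (1 - α s) · (|W T| - c)`. Since `1 - a ≤ exp (-a)`,
that product is at most `exp (-∑_{T ≤ s < t} α s)`, which tends to `0` as the series of `α`
diverges. Hence `limsup |W t| ≤ c` for every `c > 0`.
-/

open Filter Finset Topology

theorem prod_one_sub_le_exp_neg_sum {ι : Type*} (s : Finset ι) {a : ι → ℝ}
    (ha : ∀ i ∈ s, a i ≤ 1) : ∏ i ∈ s, (1 - a i) ≤ Real.exp (-∑ i ∈ s, a i) := by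
  rw [← sum_neg_distrib, Real.exp_sum]
  refine prod_le_prod (fun i hi => sub_nonneg.mpr (ha i hi)) fun i _ => ?_
  linarith [Real.add_one_le_exp (-a i)]

theorem tendsto_prod_Ico_one_sub_atTop_zero {α : ℕ → ℝ} (hα1 : ∀ t, α t ≤ 1)
    (hsum : Tendsto (fun n => ∑ t ∈ range n, α t) atTop atTop) (T : ℕ) :
    Tendsto (fun t => ∏ s ∈ Ico T t, (1 - α s)) atTop (𝓝 0) := by
  have hsumIco : Tendsto (fun t => ∑ s ∈ Ico T t, α s) atTop atTop := by
    refine (tendsto_atTop_add_const_right _ (-∑ s ∈ range T, α s) hsum).congr' ?_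
    filter_upwards [eventually_ge_atTop T] with t ht
    rw [sum_Ico_eq_sub _ ht, sub_eq_add_neg]
  refine squeeze_zero (fun t => prod_nonneg fun s _ => sub_nonneg.mpr (hα1 s))
    (fun t => prod_one_sub_le_exp_neg_sum _ fun s _ => hα1 s) ?_
  exact Real.tendsto_exp_atBot.comp (tendsto_neg_atTop_atBot.comp hsumIco)

theorem le_prod_Ico_mul_of_le_mul {u a : ℕ → ℝ} {T : ℕ} (ha : ∀ t, T ≤ t → 0 ≤ a t)
    (hu : ∀ t, T ≤ t → u (t + 1) ≤ a t * u t) {t : ℕ} (hTt : T ≤ t) :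
    u t ≤ (∏ s ∈ Ico T t, a s) * u T := by
  induction t, hTt using Nat.le_induction with
  | base => simp
  | succ t hTt ih =>
    rw [prod_Ico_succ_top hTt, mul_comm _ (a t), mul_assoc]
    exact (hu t hTt).trans (mul_le_mul_of_nonneg_left ih (ha t hTt))

theorem abs_one_sub_mul_add_mul_sub_le {a x y c : ℝ} (ha0 : 0 ≤ a) (ha1 : a ≤ 1) (hy : |y| ≤ c) :
    |(1 - a) * x + a * y| - c ≤ (1 - a) * (|x| - c) := by
  have h1a : 0 ≤ 1 - a := sub_nonneg.mpr ha1
  calc |(1 - a) * x + a * y| - c ≤ (1 - a) * |x| + a * |y| - c := by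
        grw [abs_add_le, abs_mul, abs_mul, abs_of_nonneg h1a, abs_of_nonneg ha0]
    _ ≤ (1 - a) * (|x| - c) := by nlinarith

/-- Convergence of the noise-accumulation recursion of the proof of Theorem 1:
if `0 ≤ α(t) < 1` for all `t`, `∑ α(t) = ∞`, `w(t) → 0`, and
`W(t+1) = (1 - α(t))·W(t) + α(t)·w(t)`, then `W(t) → 0`. -/
theorem noise_recursion_tendsto_zero
    (α w W : ℕ → ℝ)
    (hα : ∀ t, 0 ≤ α t ∧ α t < 1)
    (hsum : Filter.Tendsto (fun n => ∑ t ∈ Finset.range n, α t)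
      Filter.atTop Filter.atTop)
    (hw : Filter.Tendsto w Filter.atTop (nhds 0))
    (hWrec : ∀ t, W (t + 1) = (1 - α t) * W t + α t * w t) :
    Filter.Tendsto W Filter.atTop (nhds 0) := by
  have hα1 : ∀ t, α t ≤ 1 := fun t => (hα t).2.le
  refine Metric.tendsto_nhds.mpr fun ε hε => ?_
  obtain ⟨T, hT⟩ := eventually_atTop.mp
    ((Metric.tendsto_nhds.mp hw) (ε / 2) (half_pos hε))
  have hstep : ∀ s, T ≤ s → |W (s + 1)| - ε / 2 ≤ (1 - α s) * (|W s| - ε / 2) := fun s hs =>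
    hWrec s ▸ abs_one_sub_mul_add_mul_sub_le (hα s).1 (hα1 s) (by simpa using (hT s hs).le)
  have hbound : ∀ t, T ≤ t → |W t| - ε / 2 ≤ (∏ s ∈ Ico T t, (1 - α s)) * (|W T| - ε / 2) :=
    fun _ => le_prod_Ico_mul_of_le_mul (u := fun t => |W t| - ε / 2)
      (fun s _ => sub_nonneg.mpr (hα1 s)) hstep
  have hlim : Tendsto (fun t => (∏ s ∈ Ico T t, (1 - α s)) * (|W T| - ε / 2)) atTop (𝓝 0) := by
    simpa using (tendsto_prod_Ico_one_sub_atTop_zero hα1 hsum T).mul_const (|W T| - ε / 2)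
  filter_upwards [eventually_ge_atTop T, hlim.eventually (gt_mem_nhds (half_pos hε))]
    with t hTt ht
  rw [Real.dist_eq, sub_zero]
  linarith [hbound t hTt]
end
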